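/- Let f : X → Y be a prestreak morphism between archimedean prestreaks X and Y. Then f preserves and reflects all comparisons: for all x, y ∈ X and q ∈ ℚ, x < q ⟺ f(x) < q, q < y ⟺ q < f(y), and x < y ⟺ f(x) < f(y). -/

import Mathlib

/-- A prestreak: a strict order (asymmetric and cotransitive) together with a
commutative additive monoid structure and a commutative multiplicative monoid
structure on the positive part, compatible with the order.  (The intrinsic
topology conditions of the paper are omitted, being vacuous in the classical
set-theoretic setting.) -/
structure Prestreak (X : Type*) where
  lt : X → X → Prop
  add : X → X → X
  zero : X
  mul : X → X → X
  one : X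
  lt_asymm : ∀ a b, ¬ (lt a b ∧ lt b a)
  lt_cotrans : ∀ a b x, lt a b → lt a x ∨ lt x b
  add_comm : ∀ a b, add a b = add b a
  add_assoc : ∀ a b c, add (add a b) c = add a (add b c)
  add_zero : ∀ a, add a zero = a
  zero_lt_one : lt zero one
  mul_pos : ∀ a b, lt zero a → lt zero b → lt zero (mul a b)
  mul_comm : ∀ a b, lt zero a → lt zero b → mul a b = mul b a
  mul_assoc : ∀ a b c, lt zero a → lt zero b → lt zero c →
    mul (mul a b) c = mul a (mul b c)
  mul_one : ∀ a, lt zero a → mul a one = a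
  mul_add : ∀ a b c, lt zero a → lt zero b → lt zero c →
    mul (add a b) c = add (mul a c) (mul b c)
  add_lt_add_iff : ∀ a b x, (lt (add a x) (add b x) ↔ lt a b)
  mul_lt_mul_iff : ∀ a b x, lt zero a → lt zero b → lt zero x →
    (lt (mul a x) (mul b x) ↔ lt a b)

namespace Prestreak

variable {X : Type*}

/-- Multiplication by a natural number: `0·a = 0`, `(n+1)·a = n·a + a`. -/
def nsmul (P : Prestreak X) : ℕ → X → X
  | 0, _ => P.zero
  | n + 1, a => P.add (nsmul P n a) a

/-- The canonical image of a natural number, `n ↦ n·1`. -/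
def ofNat (P : Prestreak X) (n : ℕ) : X := P.nsmul n P.one

/-- Comparison `x < q` of an element of a prestreak with a rational number,
using the canonical representation `q = (q.num⁺ − q.num⁻)/q.den`:
`x < (a−b)/c  :=  c·x + b < a`. -/
def ltQ (P : Prestreak X) (x : X) (q : ℚ) : Prop :=
  P.lt (P.add (P.nsmul q.den x) (P.ofNat ((-q.num).toNat))) (P.ofNat q.num.toNat)

/-- Comparison `q < x` of a rational with an element of a prestreak:
`(a−b)/c < x  :=  a < c·x + b`. -/
def qLt (P : Prestreak X) (q : ℚ) (x : X) : Prop :=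
  P.lt (P.ofNat q.num.toNat) (P.add (P.nsmul q.den x) (P.ofNat ((-q.num).toNat)))

/-- The archimedean property for prestreaks. -/
def Archimedean (P : Prestreak X) : Prop :=
  ∀ a b c d : X, P.lt b d →
    ∃ n : ℕ, P.lt (P.add a (P.nsmul n b)) (P.add c (P.nsmul n d))

/-- Tightness: antisymmetry of `≤` (where `a ≤ b := ¬ b < a`).
A streak is a tight archimedean prestreak. -/
def Tight (P : Prestreak X) : Prop :=
  ∀ a b : X, ¬ P.lt a b → ¬ P.lt b a → a = b

/-- The apartness relation `a # b := a < b ∨ b < a`. -/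
def Apart (P : Prestreak X) (a b : X) : Prop := P.lt a b ∨ P.lt b a

/-- A morphism of prestreaks: preserves `<`, `+`, `0`, `1` and products of
positive elements. -/
def IsHom {Y : Type*} (P : Prestreak X) (Q : Prestreak Y) (f : X → Y) : Prop :=
  (∀ a b, P.lt a b → Q.lt (f a) (f b)) ∧
  (∀ a b, f (P.add a b) = Q.add (f a) (f b)) ∧
  f P.zero = Q.zero ∧ f P.one = Q.one ∧
  (∀ a b, P.lt P.zero a → P.lt P.zero b → f (P.mul a b) = Q.mul (f a) (f b))

/-- A multiplicative structure on a prestreak: a total multiplication which is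
commutative, associative, distributes over addition, has unit `1`, restricts to
the given multiplication on positive elements, and satisfies the multiplicity
condition. -/
def IsMultiplicative (P : Prestreak X) (tmul : X → X → X) : Prop :=
  (∀ a b, tmul a b = tmul b a) ∧
  (∀ a b c, tmul (tmul a b) c = tmul a (tmul b c)) ∧
  (∀ a b c, tmul (P.add a b) c = P.add (tmul a c) (tmul b c)) ∧
  (∀ a, tmul a P.one = a) ∧
  (∀ a b, P.lt P.zero a → P.lt P.zero b → tmul a b = P.mul a b) ∧
  (∀ a b c d, P.lt b a → P.lt d c →
    P.lt (P.add (tmul a d) (tmul b c)) (P.add (tmul a c) (tmul b d)))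

/-!
Morphisms preserve `<` by definition, and they commute with `n·_` and fix the naturals, so the
rational comparisons reduce to comparisons `a < b` in `X`; it remains to see that `f` reflects `<`.
If `f x < f y`, the archimedean property of `Y` yields `n, j, k` with
`n·f x + j < k < k + 1 < n·f y + j`. Cotransitivity of `k < k + 1` in `X`, together with the
fact that `f` preserves `<` and fixes `k`, `k + 1`, forces `n·x + j < k + 1 < n·y + j`, and
hence `x < y`.
-/

variable (P : Prestreak X)

theorem not_lt_of_lt {a b : X} (h : P.lt a b) : ¬ P.lt b a :=
  fun h' => P.lt_asymm a b ⟨h, h'⟩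

theorem lt_irrefl (a : X) : ¬ P.lt a a :=
  fun h => P.not_lt_of_lt h h

theorem zero_add (a : X) : P.add P.zero a = a := by
  rw [P.add_comm, P.add_zero]

theorem add_lt_add_iff_left (a b x : X) : P.lt (P.add x a) (P.add x b) ↔ P.lt a b := by
  rw [P.add_comm x a, P.add_comm x b, P.add_lt_add_iff]

theorem nsmul_zero (n : ℕ) : P.nsmul n P.zero = P.zero := by
  induction n with
  | zero => rfl
  | succ n ih => rw [Prestreak.nsmul, ih, P.add_zero]

theorem nsmul_add (m n : ℕ) (a : X) :
    P.nsmul (m + n) a = P.add (P.nsmul m a) (P.nsmul n a) := by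
  induction n with
  | zero => exact (P.add_zero _).symm
  | succ n ih => rw [← Nat.add_assoc, Prestreak.nsmul, Prestreak.nsmul, ih, P.add_assoc]

theorem ofNat_add (m n : ℕ) : P.ofNat (m + n) = P.add (P.ofNat m) (P.ofNat n) :=
  P.nsmul_add m n P.one

theorem ofNat_lt_ofNat_succ (k : ℕ) : P.lt (P.ofNat k) (P.ofNat (k + 1)) := by
  have h := (P.add_lt_add_iff_left P.zero P.one (P.ofNat k)).mpr P.zero_lt_one
  rwa [P.add_zero] at h

theorem lt_of_nsmul_lt_nsmul {x y : X} (n : ℕ) (h : P.lt (P.nsmul n x) (P.nsmul n y)) :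
    P.lt x y := by
  induction n with
  | zero => exact absurd h (P.lt_irrefl P.zero)
  | succ n ih =>
    rcases P.lt_cotrans _ _ (P.add (P.nsmul n y) x) h with h | h
    · exact ih ((P.add_lt_add_iff _ _ x).mp h)
    · exact (P.add_lt_add_iff_left x y _).mp h

section Archimedean

variable {P}

theorem Archimedean.exists_lt_ofNat (hP : P.Archimedean) (a : X) : ∃ m, P.lt a (P.ofNat m) := by
  obtain ⟨m, hm⟩ := hP a P.zero P.zero P.one P.zero_lt_one
  rw [P.nsmul_zero, P.add_zero, P.zero_add] at hm
  exact ⟨m, hm⟩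

theorem Archimedean.exists_pos_add_ofNat (hP : P.Archimedean) (a : X) :
    ∃ m, P.lt P.zero (P.add a (P.ofNat m)) := by
  obtain ⟨m, hm⟩ := hP P.zero P.zero a P.one P.zero_lt_one
  rw [P.nsmul_zero, P.add_zero] at hm
  exact ⟨m, hm⟩

/-- Take `k` least with `a < k`; then `k - 1 ≤ a`, so `a + 2 < b` forces `k + 1 < b`. -/
theorem Archimedean.exists_ofNat_between_of_pos (hP : P.Archimedean) {a b : X}
    (ha : P.lt P.zero a) (hab : P.lt (P.add a (P.ofNat 2)) b) :
    ∃ k, P.lt a (P.ofNat k) ∧ P.lt (P.ofNat (k + 1)) b := by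
  classical
  have hex := hP.exists_lt_ofNat a
  refine ⟨Nat.find hex, Nat.find_spec hex, ?_⟩
  obtain ⟨k, hk⟩ : ∃ k, Nat.find hex = k + 1 := by
    refine Nat.exists_eq_succ_of_ne_zero fun h0 => P.not_lt_of_lt ha ?_
    have h := Nat.find_spec hex
    rw [h0] at h
    exact h
  have hmin : ¬ P.lt a (P.ofNat k) := Nat.find_min hex (by omega)
  rw [hk]
  refine (P.lt_cotrans _ _ _ hab).resolve_left fun h => hmin ?_
  rwa [show k + 1 + 1 = k + 2 from rfl, P.ofNat_add, P.add_lt_add_iff] at h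

theorem Archimedean.exists_ofNat_between (hP : P.Archimedean) {a b : X}
    (hab : P.lt (P.add a (P.ofNat 2)) b) :
    ∃ j k, P.lt (P.add a (P.ofNat j)) (P.ofNat k) ∧
      P.lt (P.ofNat (k + 1)) (P.add b (P.ofNat j)) := by
  obtain ⟨j, hj⟩ := hP.exists_pos_add_ofNat a
  have hab' : P.lt (P.add (P.add a (P.ofNat j)) (P.ofNat 2)) (P.add b (P.ofNat j)) := by
    rwa [P.add_assoc, P.add_comm (P.ofNat j), ← P.add_assoc, P.add_lt_add_iff]
  exact ⟨j, hP.exists_ofNat_between_of_pos hj hab'⟩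

theorem Archimedean.exists_nsmul_ofNat_between (hP : P.Archimedean) {a b : X}
    (hab : P.lt a b) :
    ∃ n j k, P.lt (P.add (P.nsmul n a) (P.ofNat j)) (P.ofNat k) ∧
      P.lt (P.ofNat (k + 1)) (P.add (P.nsmul n b) (P.ofNat j)) := by
  obtain ⟨n, hn⟩ := hP (P.ofNat 2) a P.zero b hab
  rw [P.zero_add, P.add_comm] at hn
  exact ⟨n, hP.exists_ofNat_between hn⟩

end Archimedean

namespace IsHom

variable {P} {Y : Type*} {Q : Prestreak Y} {f : X → Y}

theorem map_add (hf : P.IsHom Q f) (a b : X) : f (P.add a b) = Q.add (f a) (f b) :=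
  hf.2.1 a b

theorem map_nsmul (hf : P.IsHom Q f) (n : ℕ) (a : X) :
    f (P.nsmul n a) = Q.nsmul n (f a) := by
  induction n with
  | zero => exact hf.2.2.1
  | succ n ih => rw [Prestreak.nsmul, Prestreak.nsmul, hf.map_add, ih]

theorem map_ofNat (hf : P.IsHom Q f) (n : ℕ) : f (P.ofNat n) = Q.ofNat n := by
  rw [ofNat, ofNat, hf.map_nsmul, hf.2.2.2.1]

theorem not_lt_of_map_lt (hf : P.IsHom Q f) {a b : X} (h : Q.lt (f b) (f a)) :
    ¬ P.lt a b :=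
  fun h' => Q.not_lt_of_lt h (hf.1 a b h')

theorem lt_of_map_lt (hQ : Q.Archimedean) (hf : P.IsHom Q f) {x y : X}
    (h : Q.lt (f x) (f y)) : P.lt x y := by
  obtain ⟨n, j, k, hlo, hhi⟩ := hQ.exists_nsmul_ofNat_between h
  refine P.lt_of_nsmul_lt_nsmul n ((P.add_lt_add_iff _ _ (P.ofNat j)).mp ?_)
  have hx : P.lt (P.add (P.nsmul n x) (P.ofNat j)) (P.ofNat (k + 1)) :=
    (P.lt_cotrans _ _ _ (P.ofNat_lt_ofNat_succ k)).resolve_left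
      (hf.not_lt_of_map_lt (by rwa [hf.map_add, hf.map_nsmul, hf.map_ofNat, hf.map_ofNat]))
  exact (P.lt_cotrans _ _ _ hx).resolve_right
    (hf.not_lt_of_map_lt (by rwa [hf.map_add, hf.map_nsmul, hf.map_ofNat, hf.map_ofNat]))

theorem lt_iff (hQ : Q.Archimedean) (hf : P.IsHom Q f) (x y : X) :
    P.lt x y ↔ Q.lt (f x) (f y) :=
  ⟨hf.1 x y, hf.lt_of_map_lt hQ⟩

end IsHom

end Prestreak

theorem hom_preserves_and_reflects_order_general {X Y : Type*}
    (P : Prestreak X) (Q : Prestreak Y)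
    (hQ : Q.Archimedean)
    (f : X → Y) (hf : P.IsHom Q f) :
    ∀ (x y : X) (q : ℚ),
      (P.ltQ x q ↔ Q.ltQ (f x) q) ∧
      (P.qLt q y ↔ Q.qLt q (f y)) ∧
      (P.lt x y ↔ Q.lt (f x) (f y)) := by
  intro x y q
  refine ⟨?_, ?_, hf.lt_iff hQ x y⟩ <;>
    simp only [Prestreak.ltQ, Prestreak.qLt, hf.lt_iff hQ, hf.map_add, hf.map_nsmul,
      hf.map_ofNat]

/-- A prestreak morphism between archimedean prestreaks preserves and reflects
all comparisons (with rationals on either side, and internal). -/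
theorem hom_preserves_and_reflects_order {X Y : Type*}
    (P : Prestreak X) (Q : Prestreak Y)
    (hP : P.Archimedean) (hQ : Q.Archimedean)
    (f : X → Y) (hf : P.IsHom Q f) :
    ∀ (x y : X) (q : ℚ),
      (P.ltQ x q ↔ Q.ltQ (f x) q) ∧
      (P.qLt q y ↔ Q.qLt q (f y)) ∧
      (P.lt x y ↔ Q.lt (f x) (f y)) :=
  hom_preserves_and_reflects_order_general P Q hQ f hf
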